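/- arXiv:2008.09001 — 5 statements merged into one kernel-verified Lean document; each statement's English description precedes it below -/
import Mathlib

section
/- Let k be a positive integer, f(k) a non-negative function of k, and G a graph on n vertices with n ≥ f(k)+k. If G has a strong (f(k),k)-decomposition, then G does not contain a k-connected subgraph on at least n-f(k) vertices. -/
/-- A finite set `S` of vertices induces a `k`-connected subgraph of `G`:
it has more than `k` vertices and removing any set of fewer than `k`
vertices leaves the induced graph connected. -/
def KConnOn {V : Type*} [Fintype V] [DecidableEq V]
    (G : SimpleGraph V) (k : ℕ) (S : Finset V) : Prop :=
  k < S.card ∧ ∀ T : Finset V, T.card < k →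
    (G.induce ((S : Set V) \ (T : Set V))).Connected

/-- An `(f, k)`-decomposition of a graph `G`, given by triples
`(A i, C i, D i)` for `i ∈ [1, l]`. -/
structure IsDecomp {V : Type*} [Fintype V] [DecidableEq V]
    (G : SimpleGraph V) (f k l : ℕ) (A C D : ℕ → Finset V) : Prop where
  hl : 1 ≤ l
  union1 : A 1 ∪ C 1 ∪ D 1 = Finset.univ
  disj1 : Disjoint (A 1) (C 1) ∧ Disjoint (A 1) (D 1) ∧ Disjoint (C 1) (D 1)
  union2 : ∀ i, 1 ≤ i → i ≤ l - 1 →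
    C i ∪ D i = A (i+1) ∪ C (i+1) ∪ D (i+1)
  disj2 : ∀ i, 1 ≤ i → i ≤ l - 1 →
    Disjoint (A (i+1)) (C (i+1)) ∧ Disjoint (A (i+1)) (D (i+1)) ∧
      Disjoint (C (i+1)) (D (i+1))
  hC : ∀ i, 1 ≤ i → i ≤ l → (C i).card ≤ k - 1
  hA : ∀ i, 1 ≤ i → i ≤ l → 1 ≤ (A i).card ∧ (A i).card ≤ (D i).card
  hAD : ∀ i, 1 ≤ i → i ≤ l → ∀ a ∈ A i, ∀ d ∈ D i, ¬ G.Adj a d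
  hbig : ∀ i, 1 ≤ i → i ≤ l - 1 →
    Fintype.card V - f ≤ (C i).card + (D i).card
  hlast : (C l).card + (D l).card < Fintype.card V - f

/-- If `G` (on `n ≥ f + k` vertices) has a strong `(f, k)`-decomposition,
then `G` has no `k`-connected subgraph on at least `n - f` vertices. -/
theorem stmt_8 {V : Type*} [Fintype V] [DecidableEq V]
    (G : SimpleGraph V) (f k l : ℕ) (hk : 0 < k)
    (hn : f + k ≤ Fintype.card V) (A C D : ℕ → Finset V)
    (hdec : IsDecomp G f k l A C D)
    (hstrong : ∀ i, 1 ≤ i → i ≤ l →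
      (A i).card + (C i).card < Fintype.card V - f) :
    ¬ ∃ S : Finset V, Fintype.card V - f ≤ S.card ∧ KConnOn G k S := by
  rintro ⟨S, hScard, hSk, hSconn⟩
  -- disjointness of A i and D i for all relevant i
  have hdisjAD : ∀ i, 1 ≤ i → i ≤ l → Disjoint (A i) (D i) := by
    intro i h1 h2
    match i, h1 with
    | 1, _ => exact hdec.disj1.2.1
    | (j+2), _ =>
      exact (hdec.disj2 (j+1) (by omega) (by have := hdec.hl; omega)).2.1
  -- the key step lemma
  have step : ∀ i, 1 ≤ i → i ≤ l → S ⊆ A i ∪ C i ∪ D i → S ⊆ C i ∪ D i := by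
    intro i h1 h2 hsub
    -- first: there is d ∈ S ∩ D i with d ∉ C i
    have hconn := hSconn (C i) (by have := hdec.hC i h1 h2; omega)
    by_cases hd : ∃ d ∈ S, d ∈ D i ∧ d ∉ C i
    · obtain ⟨d, hdS, hdD, hdC⟩ := hd
      intro s hs
      rcases Finset.mem_union.mp (hsub hs) with hs' | hsD
      · rcases Finset.mem_union.mp hs' with hsA | hsC
        · -- s ∈ A i : derive a contradiction via a walk from s to d
          by_cases hsC : s ∈ C i
          · exact Finset.mem_union_left _ hsC
          · exfalso
            set X : Set V := (S : Set V) \ (C i : Set V) with hX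
            have hsX : s ∈ X := ⟨hs, hsC⟩
            have hdX : d ∈ X := ⟨hdS, hdC⟩
            obtain ⟨w⟩ := hconn.preconnected ⟨s, hsX⟩ ⟨d, hdX⟩
            have key : ∀ {u v : X}, (G.induce X).Walk u v →
                (u : V) ∈ A i → (v : V) ∈ A i := by
              intro u v w
              induction w with
              | nil => exact id
              | @cons u m v hadj p ih =>
                intro hu
                have hGadj : G.Adj (u : V) (m : V) := hadj
                have hmX : (m : V) ∈ X := m.2
                have hmS : (m : V) ∈ S := hmX.1
                have hmC : (m : V) ∉ C i := hmX.2
                rcases Finset.mem_union.mp (hsub hmS) with hm' | hmD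
                · rcases Finset.mem_union.mp hm' with hmA | hmC' <;>
                    [exact ih hmA; exact absurd hmC' hmC]
                · exact absurd hGadj (hdec.hAD i h1 h2 _ hu _ hmD)
            have : (d : V) ∈ A i := key w hsA
            exact (hdisjAD i h1 h2).forall_ne_finset this hdD rfl
        · exact Finset.mem_union_left _ hsC
      · exact Finset.mem_union_right _ hsD
    · -- no such d: then S ⊆ A i ∪ C i, contradicting hstrong
      exfalso
      push_neg at hd
      have hsub' : S ⊆ A i ∪ C i := by
        intro s hs
        rcases Finset.mem_union.mp (hsub hs) with hs' | hsD
        · exact hs'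
        · exact Finset.mem_union_right _ (by
            by_contra hsC
            exact hsC (hd s hs hsD))
      have h1' : S.card ≤ (A i).card + (C i).card :=
        le_trans (Finset.card_le_card hsub') (Finset.card_union_le _ _)
      have := hstrong i h1 h2
      omega
  -- invariant by induction
  have inv : ∀ i, 1 ≤ i → i ≤ l → S ⊆ A i ∪ C i ∪ D i := by
    intro i h1
    induction i, h1 using Nat.le_induction with
    | base => intro _; rw [hdec.union1]; exact fun s _ => Finset.mem_univ s
    | succ i hi ih =>
      intro h2
      have hil : i ≤ l := by omega
      have hsub := step i hi hil (ih hil)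
      rw [← hdec.union2 i hi (by omega)]
      exact hsub
  -- conclude at i = l
  have hfin : S ⊆ C l ∪ D l := step l hdec.hl le_rfl (inv l hdec.hl le_rfl)
  have h1' : S.card ≤ (C l).card + (D l).card :=
    le_trans (Finset.card_le_card hfin) (Finset.card_union_le _ _)
  have := hdec.hlast
  omega
end

section
/- Let G be a graph with disjoint vertex sets A, C, D such that every vertex of A is adjacent to every vertex of D, and |C| ≤ k-1. If H is a k-connected subgraph of G induced inside C ∪ D with |V(H)| ≥ 2k-1, then the subgraph of G induced by A ∪ V(H) is also k-connected, provided A is nonempty. -/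
namespace SimpleGraph

lemma induce_union_connected_of_forall_adj {V : Type*} (G : SimpleGraph V) {s t : Set V} {d : V}
    (hs : (G.induce s).Connected) (hd : d ∈ s) (ht : ∀ x ∈ t, G.Adj d x) :
    (G.induce (s ∪ t)).Connected := by
  refine G.induce_connected_of_patches d (Or.inl hd) fun {v} hv => ?_
  rcases hv with hv | hv
  · exact ⟨s, Set.subset_union_left, hd, hv, hs.preconnected _ _⟩
  · refine ⟨{d, v}, Set.insert_subset (Or.inl hd) (Set.singleton_subset_iff.mpr (Or.inr hv)),
      Set.mem_insert _ _, Set.mem_insert_of_mem _ rfl, ?_⟩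
    exact (G.induce_pair_connected_of_adj (ht v hv)).preconnected _ _

end SimpleGraph

theorem stmt_9_general {V : Type*} [Fintype V] [DecidableEq V]
    (G : SimpleGraph V) (k : ℕ) (A C D : Finset V)
    (hcomp : ∀ a ∈ A, ∀ d ∈ D, G.Adj a d)
    (hC : C.card ≤ k - 1)
    (S : Finset V) (hS : S ⊆ C ∪ D)
    (hconn : KConnOn G k S) (hcard : 2 * k - 1 ≤ S.card) :
    KConnOn G k (A ∪ S) := by
  refine ⟨hconn.1.trans_le (Finset.card_le_card Finset.subset_union_right), fun T hT => ?_⟩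
  obtain ⟨d, hdS, hdCT⟩ : ∃ d ∈ S, d ∉ C ∪ T :=
    Finset.exists_mem_notMem_of_card_lt_card (by have := Finset.card_union_le C T; omega)
  have hdD : d ∈ D :=
    (Finset.mem_union.mp (hS hdS)).resolve_left fun h => hdCT (Finset.mem_union_left T h)
  have hsplit : ((A ∪ S : Finset V) : Set V) \ T = ((S : Set V) \ T) ∪ ((A : Set V) \ T) := by
    rw [Finset.coe_union, Set.union_sdiff_distrib, Set.union_comm]
  rw [hsplit]
  exact G.induce_union_connected_of_forall_adj (hconn.2 T hT)
    ⟨hdS, fun h => hdCT (Finset.mem_union_right C h)⟩ fun a ha => (hcomp a ha.1 d hdD).symm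

/-- If `[A, D]` is complete in `G`, `|C| ≤ k - 1`, and `H = G(S)` is a
`k`-connected subgraph inside `C ∪ D` with `|S| ≥ 2k - 1`, then the
subgraph induced by `A ∪ S` is `k`-connected (for `A` nonempty). -/
theorem stmt_9 {V : Type*} [Fintype V] [DecidableEq V]
    (G : SimpleGraph V) (k : ℕ) (hk : 0 < k) (A C D : Finset V)
    (hAC : Disjoint A C) (hAD : Disjoint A D) (hCD : Disjoint C D)
    (hcomp : ∀ a ∈ A, ∀ d ∈ D, G.Adj a d)
    (hC : C.card ≤ k - 1)
    (S : Finset V) (hS : S ⊆ C ∪ D)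
    (hconn : KConnOn G k S) (hcard : 2 * k - 1 ≤ S.card)
    (hAne : A.Nonempty) :
    KConnOn G k (A ∪ S) :=
  stmt_9_general G k A C D hcomp hC S hS hconn hcard
end

section
/- Let {(A_i, C_i, D_i)}, i ∈ [1,l], be a (2k-2, k)-decomposition of a graph R on n vertices (n ≥ 3k-2), and suppose the complement graph B of R has no k-connected subgraph on at least n-2k+2 vertices. Then |A_i| ≤ k-1 for every i ∈ [1,l]. -/
lemma conn_core {V : Type*} [Fintype V] [DecidableEq V] (G : SimpleGraph V) (k : ℕ)
    (X Y S T : Finset V) (hXS : X ⊆ S) (hYS : Y ⊆ S) (hXY : Disjoint X Y)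
    (hkX : k ≤ X.card) (hkY : k ≤ Y.card) (hT : T.card < k)
    (hadj : ∀ x ∈ X, ∀ y ∈ Y, G.Adj x y)
    (hfr : ∀ v ∈ S, v ∉ X → v ∉ Y → ∃ Cv : Finset V, Cv.card < k ∧
      ∀ w ∈ X ∪ Y, w ∉ Cv → w ≠ v → G.Adj v w) :
    (G.induce ((S : Set V) \ (T : Set V))).Connected := by
  classical
  have hXnT : ¬ X ⊆ T := fun h => absurd (Finset.card_le_card h) (by omega)
  have hYnT : ¬ Y ⊆ T := fun h => absurd (Finset.card_le_card h) (by omega)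
  obtain ⟨x0, hx0X, hx0T⟩ := Finset.not_subset.mp hXnT
  obtain ⟨y0, hy0Y, hy0T⟩ := Finset.not_subset.mp hYnT
  set Ω : Set V := (S : Set V) \ (T : Set V) with hΩ
  have memST : ∀ a : V, a ∈ S → a ∉ T → a ∈ Ω := by
    intro a h1 h2; exact ⟨h1, h2⟩
  have adj' : ∀ (a b : V) (ha : a ∈ Ω) (hb : b ∈ Ω), G.Adj a b →
      (G.induce Ω).Adj ⟨a, ha⟩ ⟨b, hb⟩ := by
    intro a b ha hb h
    simpa using h
  have hx0Ω : x0 ∈ Ω := memST x0 (hXS hx0X) hx0T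
  have hy0Ω : y0 ∈ Ω := memST y0 (hYS hy0Y) hy0T
  rw [SimpleGraph.connected_iff]
  refine ⟨?_, ⟨⟨x0, hx0Ω⟩⟩⟩
  have base : ∀ b (hbΩ : b ∈ Ω), b ∈ X ∪ Y →
      (G.induce Ω).Reachable ⟨b, hbΩ⟩ ⟨x0, hx0Ω⟩ := by
    intro b hbΩ hb
    rcases Finset.mem_union.mp hb with hbX | hbY
    · by_cases hbx : b = x0
      · subst hbx; exact SimpleGraph.Reachable.refl _
      · have h1 : (G.induce Ω).Adj ⟨b, hbΩ⟩ ⟨y0, hy0Ω⟩ :=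
          adj' _ _ _ _ (hadj b hbX y0 hy0Y)
        have h2 : (G.induce Ω).Adj ⟨x0, hx0Ω⟩ ⟨y0, hy0Ω⟩ :=
          adj' _ _ _ _ (hadj x0 hx0X y0 hy0Y)
        exact h1.reachable.trans h2.reachable.symm
    · have h1 : (G.induce Ω).Adj ⟨x0, hx0Ω⟩ ⟨b, hbΩ⟩ :=
        adj' _ _ _ _ (hadj x0 hx0X b hbY)
      exact h1.reachable.symm
  have key : ∀ u : Ω, (G.induce Ω).Reachable u ⟨x0, hx0Ω⟩ := by
    rintro ⟨a, haΩ⟩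
    have haS' : a ∈ S := haΩ.1
    have haT' : a ∉ T := haΩ.2
    by_cases haXY : a ∈ X ∪ Y
    · exact base a haΩ haXY
    · have haX : a ∉ X := fun h => haXY (Finset.mem_union_left _ h)
      have haY : a ∉ Y := fun h => haXY (Finset.mem_union_right _ h)
      obtain ⟨Cv, hCs, hCadj⟩ := hfr a haS' haX haY
      have hW : ¬ (X ∪ Y ⊆ Cv ∪ T ∪ {a}) := by
        intro h
        have h1 : (X ∪ Y).card = X.card + Y.card := Finset.card_union_of_disjoint hXY
        have h2 : (Cv ∪ T ∪ {a}).card ≤ Cv.card + T.card + 1 := by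
          calc (Cv ∪ T ∪ {a}).card ≤ (Cv ∪ T).card + ({a} : Finset V).card :=
                Finset.card_union_le _ _
            _ ≤ Cv.card + T.card + 1 := by
                have := Finset.card_union_le Cv T
                simp only [Finset.card_singleton]
                omega
        have := Finset.card_le_card h
        omega
      obtain ⟨w, hwXY, hw2⟩ := Finset.not_subset.mp hW
      have hwCv : w ∉ Cv := fun h => hw2 (by simp [h])
      have hwT : w ∉ T := fun h => hw2 (by simp [h])
      have hwa : w ≠ a := fun h => hw2 (by simp [h])
      have hwS : w ∈ S := by
        rcases Finset.mem_union.mp hwXY with h | h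
        · exact hXS h
        · exact hYS h
      have hwΩ : w ∈ Ω := memST w hwS hwT
      have hadj1 : (G.induce Ω).Adj ⟨a, haΩ⟩ ⟨w, hwΩ⟩ :=
        adj' _ _ _ _ (hCadj w hwXY hwCv hwa)
      exact hadj1.reachable.trans (base w hwΩ hwXY)
  intro u v
  exact (key u).trans (key v).symm


/-- If `R` (on `n ≥ 3k - 2` vertices) has a `(2k-2, k)`-decomposition and the
complement `Rᶜ` has no `k`-connected subgraph on at least `n - (2k-2)`
vertices, then `|A i| ≤ k - 1` for every `i ∈ [1, l]`. -/
theorem stmt_11 {V : Type*} [Fintype V] [DecidableEq V]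
    (R : SimpleGraph V) (k l : ℕ) (hk : 0 < k)
    (hn : 3 * k - 2 ≤ Fintype.card V) (A C D : ℕ → Finset V)
    (hdec : IsDecomp R (2 * k - 2) k l A C D)
    (hnoblue : ¬ ∃ S : Finset V,
      Fintype.card V - (2 * k - 2) ≤ S.card ∧ KConnOn Rᶜ k S) :
    ∀ i, 1 ≤ i → i ≤ l → (A i).card ≤ k - 1 := by
  classical
  -- pairwise disjointness at every level
  have disj : ∀ i, 1 ≤ i → i ≤ l →
      Disjoint (A i) (C i) ∧ Disjoint (A i) (D i) ∧ Disjoint (C i) (D i) := by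
    intro i h1 h2
    match i, h1 with
    | 1, _ => exact hdec.disj1
    | (m+2), _ => exact hdec.disj2 (m+1) (by omega) (by omega)
  -- chain : A i ∪ C i ∪ D i ⊆ C j ∪ D j  for 1 ≤ j < i ≤ l
  have chain : ∀ i, 1 ≤ i → i ≤ l → ∀ j, 1 ≤ j → j < i →
      (A i ∪ C i ∪ D i : Finset V) ⊆ C j ∪ D j := by
    intro i
    induction i with
    | zero => omega
    | succ m ih =>
      intro _ h2 j hj1 hj2
      rcases Nat.lt_or_ge j m with hjm | hjm
      · have hm1 : 1 ≤ m := by omega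
        have hml : m ≤ l := by omega
        refine (fun v hv => ?_ : (A (m+1) ∪ C (m+1) ∪ D (m+1) : Finset V) ⊆ C j ∪ D j)
        have heq := hdec.union2 m hm1 (by omega)
        have hv' : v ∈ (C m ∪ D m : Finset V) := by rw [heq]; exact hv
        have : v ∈ (A m ∪ C m ∪ D m : Finset V) := by
          rcases Finset.mem_union.mp hv' with h | h
          · exact Finset.mem_union_left _ (Finset.mem_union_right _ h)
          · exact Finset.mem_union_right _ h
        exact ih hm1 hml j hj1 hjm this
      · have hjm' : j = m := by omega
        subst hjm'
        have heq := hdec.union2 j (by omega) (by omega)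
        rw [← heq]
  -- cover : every vertex is in some earlier A j or in A i ∪ C i ∪ D i
  have cover : ∀ i, 1 ≤ i → i ≤ l → ∀ v : V,
      (∃ j, 1 ≤ j ∧ j < i ∧ v ∈ A j) ∨ v ∈ (A i ∪ C i ∪ D i : Finset V) := by
    intro i
    induction i with
    | zero => omega
    | succ m ih =>
      intro _ h2 v
      by_cases hm : m = 0
      · subst hm
        right
        rw [hdec.union1]; exact Finset.mem_univ v
      · have hm1 : 1 ≤ m := by omega
        have hml : m ≤ l := by omega
        rcases ih hm1 hml v with ⟨j, hj1, hj2, hj3⟩ | hv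
        · exact Or.inl ⟨j, hj1, by omega, hj3⟩
        · rcases Finset.mem_union.mp hv with hv' | hvD
          · rcases Finset.mem_union.mp hv' with hvA | hvC
            · exact Or.inl ⟨m, hm1, by omega, hvA⟩
            · right
              rw [← hdec.union2 m hm1 (by omega)]
              exact Finset.mem_union_left _ hvC
          · right
            rw [← hdec.union2 m hm1 (by omega)]
            exact Finset.mem_union_right _ hvD
  intro i hi1 hil
  by_contra hcon
  have hAk : k ≤ (A i).card := by omega
  have hDk : k ≤ (D i).card := le_trans hAk (hdec.hA i hi1 hil).2
  obtain ⟨dAC, dAD, dCD⟩ := disj i hi1 hil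
  set S : Finset V := Finset.univ \ C i with hS
  have hXS : A i ⊆ S := by
    intro v hv
    simp only [hS, Finset.mem_sdiff, Finset.mem_univ, true_and]
    exact Finset.disjoint_left.mp dAC hv
  have hYS : D i ⊆ S := by
    intro v hv
    simp only [hS, Finset.mem_sdiff, Finset.mem_univ, true_and]
    exact Finset.disjoint_left.mp dCD.symm hv
  have hadj : ∀ x ∈ A i, ∀ y ∈ D i, (Rᶜ).Adj x y := by
    intro x hx y hy
    rw [SimpleGraph.compl_adj]
    exact ⟨fun h => (Finset.disjoint_left.mp dAD hx) (h ▸ hy),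
      hdec.hAD i hi1 hil x hx y hy⟩
  have hfr : ∀ v ∈ S, v ∉ A i → v ∉ D i → ∃ Cv : Finset V, Cv.card < k ∧
      ∀ w ∈ A i ∪ D i, w ∉ Cv → w ≠ v → (Rᶜ).Adj v w := by
    intro v hvS hvA hvD
    have hvC : v ∉ C i := by
      simp only [hS, Finset.mem_sdiff] at hvS
      exact hvS.2
    rcases cover i hi1 hil v with ⟨j, hj1, hj2, hj3⟩ | hv
    · refine ⟨C j, ?_, ?_⟩
      · have := hdec.hC j hj1 (by omega)
        omega
      · intro w hw hwC hwv
        have hjl : j ≤ l := by omega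
        have hwCD : w ∈ (C j ∪ D j : Finset V) := by
          apply chain i hi1 hil j hj1 hj2
          rcases Finset.mem_union.mp hw with h | h
          · exact Finset.mem_union_left _ (Finset.mem_union_left _ h)
          · exact Finset.mem_union_right _ h
        have hwD : w ∈ D j := by
          rcases Finset.mem_union.mp hwCD with h | h
          · exact absurd h hwC
          · exact h
        rw [SimpleGraph.compl_adj]
        exact ⟨fun h => hwv (h.symm), hdec.hAD j hj1 hjl v hj3 w hwD⟩
    · exfalso
      rcases Finset.mem_union.mp hv with h | h
      · rcases Finset.mem_union.mp h with h' | h'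
        · exact hvA h'
        · exact hvC h'
      · exact hvD h
  apply hnoblue
  refine ⟨S, ?_, ?_, ?_⟩
  · -- card bound
    have hcard : S.card = Fintype.card V - (C i).card := by
      rw [hS, Finset.card_sdiff_of_subset (Finset.subset_univ _), Finset.card_univ]
    rw [hcard]
    apply Nat.sub_le_sub_left
    have := hdec.hC i hi1 hil
    omega
  · -- k < S.card
    have h1 : (A i ∪ D i).card = (A i).card + (D i).card :=
      Finset.card_union_of_disjoint dAD
    have h2 : A i ∪ D i ⊆ S := Finset.union_subset hXS hYS
    have := Finset.card_le_card h2
    omega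
  · intro T hT
    exact conn_core Rᶜ k (A i) (D i) S T hXS hYS dAD hAk hDk hT hadj hfr
end

section
/- Let {(A_i, C_i, D_i)}, i ∈ [1,l], be a (2k-2, k)-decomposition of a graph on n vertices with |A_i| ≤ k-1 for all i. Then 2k-1 ≤ Σ_{i=1}^{l} |A_i| ≤ 3k-3. -/
/-- For a `(2k-2, k)`-decomposition with `|A i| ≤ k - 1` for all `i`,
the total size of the `A i` lies between `2k - 1` and `3k - 3`. -/
theorem stmt_12 {V : Type*} [Fintype V] [DecidableEq V]
    (G : SimpleGraph V) (k l : ℕ) (hk : 0 < k) (A C D : ℕ → Finset V)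
    (hdec : IsDecomp G (2 * k - 2) k l A C D)
    (hAi : ∀ i, 1 ≤ i → i ≤ l → (A i).card ≤ k - 1) :
    2 * k - 1 ≤ ∑ i ∈ Finset.Icc 1 l, (A i).card ∧
      ∑ i ∈ Finset.Icc 1 l, (A i).card ≤ 3 * k - 3 := by
  have hl := hdec.hl
  have disjCD : ∀ j, 1 ≤ j → j ≤ l → Disjoint (C j) (D j) := by
    intro j hj1 hjl
    rcases Nat.lt_or_ge j 2 with h | h
    · interval_cases j
      exact hdec.disj1.2.2
    · have h' := (hdec.disj2 (j-1) (by omega) (by omega)).2.2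
      have : j - 1 + 1 = j := by omega
      rwa [this] at h'
  have key : ∀ j, 1 ≤ j → j ≤ l →
      (∑ i ∈ Finset.Icc 1 j, (A i).card) + ((C j).card + (D j).card)
        = Fintype.card V := by
    intro j
    induction j with
    | zero => omega
    | succ m ih =>
      intro h1 h2
      rcases Nat.eq_zero_or_pos m with hm | hm
      · subst hm
        simp only [Nat.zero_add, Finset.Icc_self, Finset.sum_singleton]
        obtain ⟨d1, d2, d3⟩ := hdec.disj1
        have hcard : (A 1 ∪ C 1 ∪ D 1).card
            = (A 1).card + (C 1).card + (D 1).card := by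
          rw [Finset.card_union_of_disjoint
              (Finset.disjoint_union_left.mpr ⟨d2, d3⟩),
            Finset.card_union_of_disjoint d1]
        rw [hdec.union1, Finset.card_univ] at hcard
        omega
      · have hml : m ≤ l - 1 := by omega
        obtain ⟨d1, d2, d3⟩ := hdec.disj2 m hm hml
        have hcards : (C m).card + (D m).card
            = (A (m+1)).card + (C (m+1)).card + (D (m+1)).card := by
          rw [← Finset.card_union_of_disjoint (disjCD m hm (by omega)),
            hdec.union2 m hm hml,
            Finset.card_union_of_disjoint
              (Finset.disjoint_union_left.mpr ⟨d2, d3⟩),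
            Finset.card_union_of_disjoint d1]
        have ihe := ih hm (by omega)
        rw [Finset.sum_Icc_succ_top (show 1 ≤ m + 1 by omega)]
        omega
  have keyl := key l hl le_rfl
  have hlast := hdec.hlast
  constructor
  · omega
  · rcases Nat.lt_or_ge l 2 with h2 | h2
    · interval_cases l
      simp only [Finset.Icc_self, Finset.sum_singleton]
      have := hAi 1 le_rfl le_rfl
      omega
    · have hb := hdec.hbig (l-1) (by omega) (by omega)
      obtain ⟨d1, d2, d3⟩ := hdec.disj2 (l-1) (by omega) (by omega)
      have hcards : (C (l-1)).card + (D (l-1)).card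
          = (A (l-1+1)).card + (C (l-1+1)).card + (D (l-1+1)).card := by
        rw [← Finset.card_union_of_disjoint (disjCD (l-1) (by omega) (by omega)),
          hdec.union2 (l-1) (by omega) (by omega),
          Finset.card_union_of_disjoint
            (Finset.disjoint_union_left.mpr ⟨d2, d3⟩),
          Finset.card_union_of_disjoint d1]
      have hll : l - 1 + 1 = l := by omega
      rw [hll] at hcards
      have hAl := hAi l (by omega) le_rfl
      omega
end

section
/- Let B be a graph on n vertices. Suppose there exists a sequence of distinct vertices u_1, ..., u_{2k-1} such that for each x ∈ [1, 2k-1], vertex u_x has at most k-1 neighbors in V(B) \ {u_1, ..., u_x}. Then B has no subgraph H with minimum degree at least k and at least n-2k+2 vertices; in particular, B has no k-connected subgraph on at least n-2k+2 vertices. -/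
open Finset

theorem exists_apply_mem_of_card_compl_lt {ι V : Type*} [Fintype ι] [Fintype V] [DecidableEq V]
    {u : ι → V} (hu : Function.Injective u)
    {S : Finset V} (hS : Sᶜ.card < Fintype.card ι) : ∃ i, u i ∈ S := by
  by_contra! h
  have hle : (univ : Finset ι).card ≤ Sᶜ.card :=
    card_le_card_of_injOn u (fun i _ => mem_compl.mpr (h i)) hu.injOn
  exact hS.not_ge (card_univ (α := ι) ▸ hle)

section FirstVisit

variable {V : Type*} [Fintype V] [DecidableEq V] (B : SimpleGraph V) [DecidableRel B.Adj] {m : ℕ}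

theorem filter_adj_subset_of_forall_lt_notMem (u : Fin m → V) {S : Finset V} {x : Fin m}
    (hx : ∀ y < x, u y ∉ S) :
    S.filter (B.Adj (u x)) ⊆ univ.filter fun v => B.Adj (u x) v ∧ ∀ y ≤ x, v ≠ u y := by
  intro v hv
  obtain ⟨hvS, hadj⟩ := mem_filter.mp hv
  refine mem_filter.mpr ⟨mem_univ v, hadj, fun y hy hvy => ?_⟩
  rcases hy.lt_or_eq with hlt | rfl
  · exact hx y hlt (hvy ▸ hvS)
  · exact B.loopless.irrefl _ (hvy ▸ hadj)

theorem exists_mem_card_filter_adj_lt {u : Fin m → V} (hu : Function.Injective u) {k : ℕ}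
    (hdeg : ∀ x, (univ.filter fun v => B.Adj (u x) v ∧ ∀ y ≤ x, v ≠ u y).card < k)
    {S : Finset V} (hS : Sᶜ.card < m) :
    ∃ v ∈ S, (S.filter (B.Adj v)).card < k := by
  have hmem : ∃ i, u i ∈ S :=
    exists_apply_mem_of_card_compl_lt hu ((Fintype.card_fin m).symm ▸ hS)
  obtain ⟨x, hx⟩ := exists_minimal_of_wellFoundedLT (fun i => u i ∈ S) hmem
  have hsub := filter_adj_subset_of_forall_lt_notMem B u fun y hy => hx.not_prop_of_lt hy
  exact ⟨u x, hx.prop, (card_le_card hsub).trans_lt (hdeg x)⟩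

end FirstVisit

theorem KConnOn.le_card_filter_adj {V : Type*} [Fintype V] [DecidableEq V]
    {B : SimpleGraph V} [DecidableRel B.Adj] {k : ℕ} {S : Finset V} (hS : KConnOn B k S)
    {v : V} (hv : v ∈ S) : k ≤ (S.filter (B.Adj v)).card := by
  by_contra! hlt
  set T := S.filter (B.Adj v)
  have hvT : v ∉ T := fun h => B.loopless.irrefl v (mem_filter.mp h).2
  have hcard : 1 < (S \ T).card := by
    have hsdiff : (S \ T).card = S.card - T.card := card_sdiff_of_subset (filter_subset _ _)
    have := hS.1
    omega
  have : Nontrivial ↥((S : Set V) \ (T : Set V)) := by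
    rw [← coe_sdiff, Set.nontrivial_coe_sort, nontrivial_coe, ← one_lt_card_iff_nontrivial]
    exact hcard
  obtain ⟨w, hw⟩ := (hS.2 T hlt).preconnected.exists_adj_of_nontrivial ⟨v, hv, hvT⟩
  exact w.2.2 (mem_filter.mpr ⟨w.2.1, hw⟩)

/-- If `B` has distinct vertices `u 1, …, u (2k-1)` such that each `u x` has
at most `k - 1` neighbors outside `{u 1, …, u x}`, then `B` has no subgraph
with minimum degree at least `k` on at least `n - 2k + 2` vertices, and in
particular no `k`-connected subgraph on at least `n - 2k + 2` vertices. -/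
theorem stmt_14 {V : Type*} [Fintype V] [DecidableEq V]
    (B : SimpleGraph V) [DecidableRel B.Adj] (k : ℕ) (hk : 0 < k)
    (u : Fin (2 * k - 1) → V) (hu : Function.Injective u)
    (hdeg : ∀ x : Fin (2 * k - 1),
      (Finset.univ.filter (fun v =>
        B.Adj (u x) v ∧ ∀ y : Fin (2 * k - 1), y ≤ x → v ≠ u y)).card ≤ k - 1) :
    (¬ ∃ S : Finset V, Fintype.card V - (2 * k - 2) ≤ S.card ∧
        ∀ v ∈ S, k ≤ (S.filter (fun w => B.Adj v w)).card) ∧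
    (¬ ∃ S : Finset V, Fintype.card V - (2 * k - 2) ≤ S.card ∧
        KConnOn B k S) := by
  have hdeg_lt : ∀ x, (univ.filter fun v => B.Adj (u x) v ∧ ∀ y ≤ x, v ≠ u y).card < k :=
    fun x => (hdeg x).trans_lt (Nat.sub_lt hk one_pos)
  have hmin : ¬ ∃ S : Finset V, Fintype.card V - (2 * k - 2) ≤ S.card ∧
      ∀ v ∈ S, k ≤ (S.filter (fun w => B.Adj v w)).card := by
    rintro ⟨S, hS, hmin⟩
    have hcompl : Sᶜ.card < 2 * k - 1 := by
      rw [card_compl]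
      omega
    obtain ⟨v, hv, hlt⟩ := exists_mem_card_filter_adj_lt B hu hdeg_lt hcompl
    exact (hmin v hv).not_gt hlt
  exact ⟨hmin, fun ⟨S, hS, hconn⟩ => hmin ⟨S, hS, fun _ hv => hconn.le_card_filter_adj hv⟩⟩
end
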